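/- Let F be a field of characteristic 0 and d ≥ 2. Let ζ = (ζ_{ij}^{(ℓ)} : 1 ≤ i, j ≤ d, ℓ ∈ ℕ) be commuting indeterminates, let Y_ℓ = (ζ_{ij}^{(ℓ)})_{1 ≤ i,j ≤ d} ∈ M_d(F[ζ]) be the generic matrices, and let GM_d(F) be the F-subalgebra of M_d(F[ζ]) generated by the Y_ℓ. For a = (a_ℓ)_{ℓ∈ℕ} ∈ M_d(F)^ℕ, let f ↦ f(a) denote the algebra homomorphism GM_d(F) → M_d(F) obtained by applying entrywise the F-algebra homomorphism F[ζ] → F sending ζ_{ij}^{(ℓ)} ↦ (a_ℓ)_{ij}. Then for every f ∈ GM_d(F) the following are equivalent: (i) f is a sum of commutators [g,h] = gh − hg of elements of GM_d(F); (ii) tr(f) = 0 in F[ζ]; (iii) tr(f(a)) = 0 for all a ∈ M_d(F)^ℕ; (iv) f(a) is a sum of commutators in M_d(F) for all a ∈ M_d(F)^ℕ. -/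

import Mathlib

/-!
Only (ii) ⇒ (i) has content: (i) ⇒ (iv) ⇒ (iii) hold because evaluation is a ring homomorphism and
traces of commutators vanish, and (iii) ⇒ (ii) because a polynomial over an infinite field is
determined by its values.

For (ii) ⇒ (i) write `f = ∑ c_w Y_w` as a combination of monomials `Y_w = Y_{w₀} ⋯ Y_{w_{k-1}}`.
Entries of `Y_w` are homogeneous of degree `|w|`, so every homogeneous component `f_k` of `f` has
trace zero as well. The partial derivative of `tr f_k` in `ζ_{ij}^{(ℓ)}` is the `(j, i)` entry of the
cyclic derivative `G_ℓ = ∑ c_w ∑_{w = u ℓ v} Y_v Y_u`, so all `G_ℓ` vanish, and therefore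
`0 = ∑_ℓ Y_ℓ G_ℓ = ∑ c_w ∑_p Y_{rotate w p}`. Each rotation `Y_v Y_u` of `Y_w = Y_u Y_v` differs from
it by a commutator, so `k f_k` is a sum of commutators. In characteristic `0` this gives `f_k` for
`k > 0`, while `f_0 = c • 1` with `d c = tr f_0 = 0`.
-/

open MvPolynomial Matrix

lemma Matrix.map_derivation_mul {R A n : Type*} [CommRing R] [CommRing A] [Algebra R A]
    [Fintype n] (D : Derivation R A A) (M N : Matrix n n A) :
    (M * N).map D = M.map D * N + M * N.map D := by
  ext i j
  simp only [map_apply, mul_apply, Matrix.add_apply, map_sum, Derivation.leibniz, smul_eq_mul,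
    Finset.sum_add_distrib]
  rw [add_comm]
  congr 1
  exact Finset.sum_congr rfl fun _ _ => mul_comm _ _

lemma RingHom.map_mem_closure_commutators {A B : Type*} [Ring A] [Ring B] (φ : A →+* B)
    {T : Set A} {x : A}
    (hx : x ∈ AddSubgroup.closure {x | ∃ p q, p ∈ T ∧ q ∈ T ∧ x = p * q - q * p}) :
    φ x ∈ AddSubgroup.closure {y | ∃ p q, y = p * q - q * p} := by
  refine (AddSubgroup.closure_le (K := (AddSubgroup.closure _).comap (φ : A →+ B))).2 ?_ hx
  rintro _ ⟨p, q, -, -, rfl⟩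
  exact AddSubgroup.subset_closure ⟨φ p, φ q, by simp⟩

lemma Matrix.trace_eq_zero_of_mem_closure_commutators {R n : Type*} [CommRing R] [Fintype n]
    {x : Matrix n n R} (hx : x ∈ AddSubgroup.closure {y | ∃ p q, y = p * q - q * p}) :
    trace x = 0 := by
  refine (AddSubgroup.closure_le (K := (traceAddMonoidHom n R).ker)).2 ?_ hx
  rintro _ ⟨p, q, rfl⟩
  rw [SetLike.mem_coe, AddMonoidHom.mem_ker, traceAddMonoidHom_apply, trace_sub, trace_mul_comm,
    sub_self]

namespace GenericMatrices

section CommRing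

variable {R : Type*} [CommRing R] {κ n : Type*}

variable (R) in
noncomputable def genericMatrix (ℓ : κ) : Matrix n n (MvPolynomial (κ × n × n) R) :=
  of fun i j => X (ℓ, i, j)

@[simp] lemma genericMatrix_apply (ℓ : κ) (i j : n) :
    genericMatrix R ℓ i j = (X (ℓ, i, j) : MvPolynomial (κ × n × n) R) := rfl

variable [Fintype n] [DecidableEq n]

variable (R) in
noncomputable def genericMonomial (w : List κ) : Matrix n n (MvPolynomial (κ × n × n) R) :=
  (w.map (genericMatrix R)).prod

variable (R κ n) in
noncomputable def genericMatrixAlgebra : Subalgebra R (Matrix n n (MvPolynomial (κ × n × n) R)) :=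
  Algebra.adjoin R (Set.range (genericMatrix R))

@[simp] lemma genericMonomial_nil : genericMonomial R ([] : List κ) = (1 : Matrix n n _) := rfl

@[simp] lemma genericMonomial_cons (a : κ) (w : List κ) :
    (genericMonomial R (a :: w) : Matrix n n _) = genericMatrix R a * genericMonomial R w := by
  simp [genericMonomial]

@[simp] lemma genericMonomial_append (u v : List κ) :
    (genericMonomial R (u ++ v) : Matrix n n _) = genericMonomial R u * genericMonomial R v := by
  simp [genericMonomial]

lemma genericMonomial_rotate (w : List κ) {p : ℕ} (hp : p < w.length) :
    (genericMonomial R (w.rotate p) : Matrix n n _) =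
      genericMatrix R w[p] * genericMonomial R (w.drop (p + 1) ++ w.take p) := by
  rw [List.rotate_eq_drop_append_take hp.le, List.drop_eq_getElem_cons hp, List.cons_append,
    genericMonomial_cons]

lemma genericMonomial_mem (w : List κ) : genericMonomial R w ∈ genericMatrixAlgebra R κ n :=
  list_prod_mem fun _ hx => by
    obtain ⟨ℓ, -, rfl⟩ := List.mem_map.1 hx
    exact Algebra.subset_adjoin ⟨ℓ, rfl⟩

lemma toSubmodule_genericMatrixAlgebra :
    Subalgebra.toSubmodule (genericMatrixAlgebra R κ n) =
      Submodule.span R (Set.range (genericMonomial R)) := by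
  rw [genericMatrixAlgebra, Algebra.adjoin_eq_span, ← FreeMonoid.mrange_lift]
  congr 1
  ext x
  simp only [SetLike.mem_coe, MonoidHom.mem_mrange, FreeMonoid.lift_apply, Set.mem_range,
    genericMonomial]
  exact ⟨fun ⟨y, hy⟩ => ⟨_, hy⟩, fun ⟨y, hy⟩ => ⟨FreeMonoid.ofList y, hy⟩⟩

lemma isHomogeneous_genericMonomial_apply (w : List κ) (i j : n) :
    (genericMonomial R w i j).IsHomogeneous w.length := by
  induction w generalizing i j with
  | nil => by_cases h : i = j <;> simp [one_apply, h, isHomogeneous_one, isHomogeneous_zero]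
  | cons a w ih =>
      rw [genericMonomial_cons, mul_apply]
      refine IsHomogeneous.sum _ _ _ fun u _ => ?_
      simpa [add_comm] using (isHomogeneous_X R (a, i, u)).mul (ih u j)

lemma homogeneousComponent_trace_sum (s : Finset (List κ)) (c : List κ → R) (k : ℕ) :
    homogeneousComponent k (trace (∑ w ∈ s, c w • (genericMonomial R w : Matrix n n _))) =
      trace (∑ w ∈ s with w.length = k, c w • (genericMonomial R w : Matrix n n _)) := by
  rw [trace_sum, trace_sum, map_sum, Finset.sum_filter]
  refine Finset.sum_congr rfl fun w _ => ?_
  have hw : trace (c w • (genericMonomial R w : Matrix n n _)) ∈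
      homogeneousSubmodule (κ × n × n) R w.length := by
    rw [trace_smul]
    exact Submodule.smul_mem _ _ ((mem_homogeneousSubmodule _ _).2
      (IsHomogeneous.sum _ _ _ fun i _ => isHomogeneous_genericMonomial_apply w i i))
  rw [homogeneousComponent_of_mem hw]
  exact if_congr eq_comm rfl rfl

lemma smul_genericMonomial_rotate_sub_mem (r : R) (w : List κ) {p : ℕ} (hp : p ≤ w.length) :
    r • (genericMonomial R (w.rotate p) - genericMonomial R w) ∈
      {x : Matrix n n _ | ∃ a b, a ∈ genericMatrixAlgebra R κ n ∧
        b ∈ genericMatrixAlgebra R κ n ∧ x = a * b - b * a} := by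
  refine ⟨r • genericMonomial R (w.drop p), genericMonomial R (w.take p),
    Subalgebra.smul_mem _ (genericMonomial_mem _) _, genericMonomial_mem _, ?_⟩
  have hw : (genericMonomial R w : Matrix n n _) =
      genericMonomial R (w.take p) * genericMonomial R (w.drop p) := by
    rw [← genericMonomial_append, List.take_append_drop]
  rw [List.rotate_eq_drop_append_take hp, genericMonomial_append, hw, smul_sub, smul_mul_assoc,
    mul_smul_comm]

variable [DecidableEq κ]

omit [Fintype n] in
lemma map_pderiv_genericMatrix (a ℓ : κ) (i j : n) :
    (genericMatrix R a).map (pderiv (ℓ, i, j)) = if a = ℓ then single i j 1 else 0 := by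
  ext s t
  split_ifs with h <;> simp [pderiv_X, Pi.single_apply, single_apply, h, eq_comm]

lemma map_pderiv_genericMonomial (ℓ : κ) (i j : n) (w : List κ) :
    (genericMonomial R w).map (pderiv (ℓ, i, j)) =
      ∑ p : Fin w.length, if w[p] = ℓ then
        genericMonomial R (w.take p) * single i j 1 * genericMonomial R (w.drop (p + 1)) else 0 := by
  induction w with
  | nil => ext; simp [one_apply, apply_ite]
  | cons a w ih =>
      rw [genericMonomial_cons, map_derivation_mul, map_pderiv_genericMatrix, ih, Finset.mul_sum]
      simp only [List.length_cons, Fin.sum_univ_succ]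
      congr 1
      · simp
      · exact Finset.sum_congr rfl fun p _ => by simp [mul_assoc]

variable (R) in
noncomputable def cyclicDerivative (ℓ : κ) (w : List κ) :
    Matrix n n (MvPolynomial (κ × n × n) R) :=
  ∑ p : Fin w.length, if w[p] = ℓ then genericMonomial R (w.drop (p + 1) ++ w.take p) else 0

lemma pderiv_trace_genericMonomial (ℓ : κ) (i j : n) (w : List κ) :
    pderiv (ℓ, i, j) (trace (genericMonomial R w)) = cyclicDerivative R ℓ w j i := by
  rw [AddMonoidHom.map_trace, map_pderiv_genericMonomial, cyclicDerivative, trace_sum,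
    Matrix.sum_apply]
  refine Finset.sum_congr rfl fun p _ => ?_
  split_ifs
  · rw [trace_mul_comm, ← mul_assoc, trace_mul_single, genericMonomial_append]
    simp
  · simp

lemma sum_genericMonomial_rotate (w : List κ) {S : Finset κ} (hS : w.toFinset ⊆ S) :
    ∑ p : Fin w.length, (genericMonomial R (w.rotate p) : Matrix n n _) =
      ∑ ℓ ∈ S, genericMatrix R ℓ * cyclicDerivative R ℓ w := by
  simp only [cyclicDerivative, Finset.mul_sum, mul_ite, mul_zero]
  rw [Finset.sum_comm]
  refine Finset.sum_congr rfl fun p _ => ?_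
  rw [Finset.sum_ite_eq, if_pos (hS (by simp)), genericMonomial_rotate w p.2]
  rfl

lemma sum_smul_cyclicDerivative_eq_zero {s : Finset (List κ)} {c : List κ → R}
    (h : trace (∑ w ∈ s, c w • (genericMonomial R w : Matrix n n _)) = 0) (ℓ : κ) :
    ∑ w ∈ s, c w • (cyclicDerivative R ℓ w : Matrix n n _) = 0 := by
  refine Matrix.ext fun j i => ?_
  simpa [trace_sum, trace_smul, pderiv_trace_genericMonomial, Matrix.sum_apply]
    using congrArg (pderiv (ℓ, i, j)) h

lemma sum_smul_sum_genericMonomial_rotate_eq_zero {s : Finset (List κ)} {c : List κ → R}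
    (h : trace (∑ w ∈ s, c w • (genericMonomial R w : Matrix n n _)) = 0) :
    ∑ w ∈ s, c w • ∑ p : Fin w.length, (genericMonomial R (w.rotate p) : Matrix n n _) = 0 := by
  let S := s.biUnion List.toFinset
  calc ∑ w ∈ s, c w • ∑ p : Fin w.length, (genericMonomial R (w.rotate p) : Matrix n n _)
      = ∑ w ∈ s, c w • ∑ ℓ ∈ S, genericMatrix R ℓ * cyclicDerivative R ℓ w :=
        Finset.sum_congr rfl fun w hw => by
          rw [sum_genericMonomial_rotate w (Finset.subset_biUnion_of_mem _ hw)]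
    _ = ∑ ℓ ∈ S, genericMatrix R ℓ * ∑ w ∈ s, c w • cyclicDerivative R ℓ w := by
        simp only [Finset.smul_sum, Finset.mul_sum, mul_smul_comm]
        exact Finset.sum_comm
    _ = 0 := by simp [sum_smul_cyclicDerivative_eq_zero h]

lemma sum_length_mul_smul_mem_closure {s : Finset (List κ)} {c : List κ → R}
    (h : trace (∑ w ∈ s, c w • (genericMonomial R w : Matrix n n _)) = 0) :
    ∑ w ∈ s, ((w.length : R) * c w) • (genericMonomial R w : Matrix n n _) ∈
      AddSubgroup.closure {x | ∃ a b, a ∈ genericMatrixAlgebra R κ n ∧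
        b ∈ genericMatrixAlgebra R κ n ∧ x = a * b - b * a} := by
  have hrot : ∑ w ∈ s, ∑ p : Fin w.length,
      c w • (genericMonomial R (w.rotate p) - (genericMonomial R w : Matrix n n _)) =
      -∑ w ∈ s, ((w.length : R) * c w) • genericMonomial R w := by
    simp only [← Finset.smul_sum, smul_sub, Finset.sum_sub_distrib,
      sum_smul_sum_genericMonomial_rotate_eq_zero h, zero_sub, Finset.sum_const,
      Finset.card_univ, Fintype.card_fin]
    simp only [mul_smul, Nat.cast_smul_eq_nsmul, smul_comm (c _)]
  rw [← neg_neg (∑ w ∈ s, _), ← hrot]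
  exact neg_mem (sum_mem fun w _ => sum_mem fun p _ =>
    AddSubgroup.subset_closure (smul_genericMonomial_rotate_sub_mem (c w) w p.2.le))

end CommRing

section Field

variable {F : Type*} [Field F] [CharZero F] {κ n : Type*} [Fintype n] [DecidableEq n]
  [DecidableEq κ]

lemma sum_smul_genericMonomial_mem_closure_of_length_eq {s : Finset (List κ)} {c : List κ → F}
    {k : ℕ} (hs : ∀ w ∈ s, w.length = k)
    (h : trace (∑ w ∈ s, c w • (genericMonomial F w : Matrix n n _)) = 0) :
    ∑ w ∈ s, c w • (genericMonomial F w : Matrix n n _) ∈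
      AddSubgroup.closure {x | ∃ a b, a ∈ genericMatrixAlgebra F κ n ∧
        b ∈ genericMatrixAlgebra F κ n ∧ x = a * b - b * a} := by
  rcases k.eq_zero_or_pos with rfl | hk
  · have hconst : ∑ w ∈ s, c w • (genericMonomial F w : Matrix n n _) = (∑ w ∈ s, c w) • 1 := by
      rw [Finset.sum_smul]
      exact Finset.sum_congr rfl fun w hw => by
        rw [List.eq_nil_of_length_eq_zero (hs w hw), genericMonomial_nil]
    rw [hconst] at h ⊢
    suffices (∑ w ∈ s, c w) • (1 : Matrix n n (MvPolynomial (κ × n × n) F)) = 0 by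
      rw [this]
      exact zero_mem _
    cases isEmpty_or_nonempty n
    · exact Subsingleton.elim _ _
    · have hcard : (∑ w ∈ s, c w) * (Fintype.card n : F) = 0 := by
        rw [← C_eq_zero, C_mul, ← smul_eq_C_mul, map_natCast, ← h, trace_smul, trace_one]
      rw [(mul_eq_zero.1 hcard).resolve_right (Nat.cast_ne_zero.2 Fintype.card_ne_zero),
        zero_smul]
  · have hk' : (k : F) ≠ 0 := Nat.cast_ne_zero.2 hk.ne'
    convert sum_length_mul_smul_mem_closure (c := fun w => (k : F)⁻¹ * c w) ?_ using 1
    · exact Finset.sum_congr rfl fun w hw => by rw [hs w hw, mul_inv_cancel_left₀ hk']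
    · simp_rw [mul_smul, ← Finset.smul_sum, trace_smul, h, smul_zero]

lemma mem_closure_of_trace_eq_zero {f : Matrix n n (MvPolynomial (κ × n × n) F)}
    (hf : f ∈ genericMatrixAlgebra F κ n) (h : trace f = 0) :
    f ∈ AddSubgroup.closure {x | ∃ a b, a ∈ genericMatrixAlgebra F κ n ∧
        b ∈ genericMatrixAlgebra F κ n ∧ x = a * b - b * a} := by
  rw [← Subalgebra.mem_toSubmodule, toSubmodule_genericMatrixAlgebra,
    Finsupp.mem_span_range_iff_exists_finsupp] at hf
  obtain ⟨c, rfl⟩ := hf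
  rw [Finsupp.sum] at h ⊢
  rw [← Finset.sum_fiberwise_of_maps_to (g := List.length)
    fun w hw => Finset.mem_image_of_mem _ hw]
  refine sum_mem fun k _ =>
    sum_smul_genericMonomial_mem_closure_of_length_eq (fun w hw => (Finset.mem_filter.1 hw).2) ?_
  rw [← homogeneousComponent_trace_sum, h, map_zero]

end Field

end GenericMatrices

theorem stmt_19_general (F : Type*) [Field F] [CharZero F] (d : ℕ)
    (f : Matrix (Fin d) (Fin d) (MvPolynomial (ℕ × Fin d × Fin d) F))
    (hf : f ∈ Algebra.adjoin F
      (Set.range fun ℓ : ℕ =>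
        (Matrix.of fun i j : Fin d => (MvPolynomial.X (ℓ, i, j) :
          MvPolynomial (ℕ × Fin d × Fin d) F)))) :
    let GM : Subalgebra F (Matrix (Fin d) (Fin d) (MvPolynomial (ℕ × Fin d × Fin d) F)) :=
      Algebra.adjoin F
        (Set.range fun ℓ : ℕ =>
          (Matrix.of fun i j : Fin d => (MvPolynomial.X (ℓ, i, j) :
            MvPolynomial (ℕ × Fin d × Fin d) F)))
    let evalAt : (ℕ → Matrix (Fin d) (Fin d) F) →
        Matrix (Fin d) (Fin d) (MvPolynomial (ℕ × Fin d × Fin d) F) →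
        Matrix (Fin d) (Fin d) F := fun a g =>
      g.map (MvPolynomial.eval fun p => a p.1 p.2.1 p.2.2)
    List.TFAE
      [f ∈ AddSubgroup.closure
          {x : Matrix (Fin d) (Fin d) (MvPolynomial (ℕ × Fin d × Fin d) F) |
            ∃ p q, p ∈ GM ∧ q ∈ GM ∧ x = p * q - q * p},
       Matrix.trace f = 0,
       ∀ a : ℕ → Matrix (Fin d) (Fin d) F, Matrix.trace (evalAt a f) = 0,
       ∀ a : ℕ → Matrix (Fin d) (Fin d) F,
         evalAt a f ∈ AddSubgroup.closure
           {x : Matrix (Fin d) (Fin d) F | ∃ p q, x = p * q - q * p}] := by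
  intro GM evalAt
  tfae_have 1 → 4 := fun h a => (MvPolynomial.eval _).mapMatrix.map_mem_closure_commutators h
  tfae_have 4 → 3 := fun h a => trace_eq_zero_of_mem_closure_commutators (h a)
  tfae_have 3 → 2 := fun h => MvPolynomial.funext fun x => by
    simpa [AddMonoidHom.map_trace] using h fun ℓ i j => x (ℓ, i, j)
  tfae_have 2 → 1 := GenericMatrices.mem_closure_of_trace_eq_zero hf
  tfae_finish

/-- **Theorem 5.1 (tracial Nullstellensatz for generic matrices).** Let `F` be a field
of characteristic `0` and `d ≥ 2`.  With `F[ζ]` the polynomial algebra in the commuting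
variables `ζᵢⱼ⁽ℓ⁾` (`1 ≤ i,j ≤ d`, `ℓ ∈ ℕ`), the generic matrices are
`Y ℓ = (ζᵢⱼ⁽ℓ⁾)ᵢⱼ ∈ M_d(F[ζ])` and `GM_d(F)` is the `F`-subalgebra they generate.
Each `a ∈ M_d(F)^ℕ` induces the evaluation `f ↦ f(a)` by substituting `(a_ℓ)ᵢⱼ` for
`ζᵢⱼ⁽ℓ⁾` entrywise.  For `f ∈ GM_d(F)` the following are equivalent:
(i) `f` is a sum of commutators of elements of `GM_d(F)`;
(ii) `tr f = 0` in `F[ζ]`;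
(iii) `tr (f(a)) = 0` for all `a`;
(iv) `f(a)` is a sum of commutators in `M_d(F)` for all `a`. -/
theorem stmt_19 (F : Type*) [Field F] [CharZero F] (d : ℕ) (hd : 2 ≤ d)
    (f : Matrix (Fin d) (Fin d) (MvPolynomial (ℕ × Fin d × Fin d) F))
    (hf : f ∈ Algebra.adjoin F
      (Set.range fun ℓ : ℕ =>
        (Matrix.of fun i j : Fin d => (MvPolynomial.X (ℓ, i, j) :
          MvPolynomial (ℕ × Fin d × Fin d) F)))) :
    let GM : Subalgebra F (Matrix (Fin d) (Fin d) (MvPolynomial (ℕ × Fin d × Fin d) F)) :=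
      Algebra.adjoin F
        (Set.range fun ℓ : ℕ =>
          (Matrix.of fun i j : Fin d => (MvPolynomial.X (ℓ, i, j) :
            MvPolynomial (ℕ × Fin d × Fin d) F)))
    let evalAt : (ℕ → Matrix (Fin d) (Fin d) F) →
        Matrix (Fin d) (Fin d) (MvPolynomial (ℕ × Fin d × Fin d) F) →
        Matrix (Fin d) (Fin d) F := fun a g =>
      g.map (MvPolynomial.eval fun p => a p.1 p.2.1 p.2.2)
    List.TFAE
      [f ∈ AddSubgroup.closure
          {x : Matrix (Fin d) (Fin d) (MvPolynomial (ℕ × Fin d × Fin d) F) |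
            ∃ p q, p ∈ GM ∧ q ∈ GM ∧ x = p * q - q * p},
       Matrix.trace f = 0,
       ∀ a : ℕ → Matrix (Fin d) (Fin d) F, Matrix.trace (evalAt a f) = 0,
       ∀ a : ℕ → Matrix (Fin d) (Fin d) F,
         evalAt a f ∈ AddSubgroup.closure
           {x : Matrix (Fin d) (Fin d) F | ∃ p q, x = p * q - q * p}] :=
  stmt_19_general F d f hf
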